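/- Let g ≥ 2. For every k with 3 ≤ k ≤ 2g one has Δ_k(X) ≠ 0, and for every k > 2g one has Δ_k(X) = 0. Hence the A∞-coalgebra structure on the mod-2 homology of a closed compact orientable surface of genus g ≥ 2 has non-trivial higher order structure. -/
import Mathlib


noncomputable section

/-- Generators of the mod-2 chains/homology of the closed orientable surface of genus `g`:
the vertex `v` (degree 0), edges `e i` modelling `e_{i+1}` (degree 1, 0-based indices
`i : Fin (2*g)`), and the 2-dimensional class `X` (degree 2). -/
inductive OCell (g : ℕ) : Type where
  | v : OCell g
  | e : Fin (2 * g) → OCell g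
  | X : OCell g
deriving DecidableEq

/-- `TO g k` models `M^{⊗k}`: the free `ℤ/2ℤ`-module on `k`-tuples of generators. -/
abbrev TO (g k : ℕ) : Type := (Fin k → OCell g) →₀ ZMod 2

/-- The involution `e ↦ ê` on edge indices: `ê_{2t−1} = e_{2t}`, `ê_{2t} = e_{2t−1}`
(0-based: even and odd indices are swapped in pairs). -/
def hatO {g : ℕ} (m : Fin (2 * g)) : Fin (2 * g) :=
  if h : (m : ℕ) % 2 = 0 then ⟨(m : ℕ) + 1, by have := m.isLt; omega⟩
  else ⟨(m : ℕ) - 1, by have := m.isLt; omega⟩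

/-- The `A_∞`-coalgebra operations on the generators: `Δ₂(v) = v ⊗ v`,
`Δ₂(e_i) = v ⊗ e_i + e_i ⊗ v`,
`Δ₂(X) = v ⊗ X + X ⊗ v + Σ_{i=1}^{g} (e_{2i−1} ⊗ e_{2i} + e_{2i} ⊗ e_{2i−1})`; for `k ≥ 3`,
`Δ_k` vanishes on `v` and on each `e_i` and
`Δ_k(X) = Σ_{0<i₁<⋯<i_k≤2g} (e_{i₁} ⊗ ⋯ ⊗ e_{i_k} + ê_{i₁} ⊗ ⋯ ⊗ ê_{i_k})`. -/
def DeltaOB (g : ℕ) (k : ℕ) : OCell g → TO g k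
  | .v => if k = 2 then Finsupp.single (fun _ => OCell.v) 1 else 0
  | .e i =>
      if k = 2 then
        Finsupp.single (fun p : Fin k => if (p : ℕ) = 0 then OCell.v else OCell.e i) 1 +
          Finsupp.single (fun p : Fin k => if (p : ℕ) = 0 then OCell.e i else OCell.v) 1
      else 0
  | .X =>
      if k = 2 then
        Finsupp.single (fun p : Fin k => if (p : ℕ) = 0 then OCell.v else OCell.X) 1 +
          Finsupp.single (fun p : Fin k => if (p : ℕ) = 0 then OCell.X else OCell.v) 1 +
          ∑ i : Fin g,
            (Finsupp.single (fun p : Fin k =>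
                if (p : ℕ) = 0 then OCell.e ⟨2 * (i : ℕ), by have := i.isLt; omega⟩
                else OCell.e ⟨2 * (i : ℕ) + 1, by have := i.isLt; omega⟩) 1 +
              Finsupp.single (fun p : Fin k =>
                if (p : ℕ) = 0 then OCell.e ⟨2 * (i : ℕ) + 1, by have := i.isLt; omega⟩
                else OCell.e ⟨2 * (i : ℕ), by have := i.isLt; omega⟩) 1)
      else
        ∑ f : Fin k → Fin (2 * g),
          if ∀ a b : Fin k, a < b → f a < f b then
            Finsupp.single (fun q : Fin k => OCell.e (f q)) 1 +
              Finsupp.single (fun q : Fin k => OCell.e (hatO (f q))) 1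
          else 0

/-- Splicing a `j`-tuple into a `k`-tuple at position `a`, producing an `m`-tuple
(meaningful when `m = k + j - 1` and `a < k`). -/
def spliceO {g k j : ℕ} (m a : ℕ) (x : Fin k → OCell g) (y : Fin j → OCell g) :
    Fin m → OCell g := fun q =>
  if h1 : (q : ℕ) < a ∧ (q : ℕ) < k then x ⟨q, h1.2⟩
  else if h2 : a ≤ (q : ℕ) ∧ (q : ℕ) - a < j then y ⟨(q : ℕ) - a, h2.2⟩
  else if h3 : (q : ℕ) + 1 - j < k then x ⟨(q : ℕ) + 1 - j, h3⟩
  else OCell.v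

/-- `oppO g k m j a D` is the linear map `1^{⊗a} ⊗ D ⊗ 1^{⊗(k-1-a)} : M^{⊗k} → M^{⊗m}`
(meaningful when `m = k + j - 1`), where `D` is the basis-level description of an operation
`M → M^{⊗j}`; over `ℤ/2ℤ` Koszul signs are irrelevant. -/
def oppO (g k m j a : ℕ) (D : OCell g → TO g j) : TO g k →ₗ[ZMod 2] TO g m :=
  Finsupp.linearCombination (ZMod 2) fun x : Fin k → OCell g =>
    if ha : a < k then Finsupp.mapDomain (spliceO m a x) (D (x ⟨a, ha⟩)) else 0

/-- `Δ_k` as a linear map `M → M^{⊗k}`. -/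
def DmapO (g k : ℕ) : TO g 1 →ₗ[ZMod 2] TO g k :=
  Finsupp.linearCombination (ZMod 2) fun x : Fin 1 → OCell g => DeltaOB g k (x 0)

end

lemma hatO_hatO {g : ℕ} (m : Fin (2 * g)) : hatO (hatO m) = m := by
  unfold hatO
  rcases Nat.even_or_odd (m : ℕ) with he | ho
  · have h2 : (m : ℕ) % 2 = 0 := Nat.even_iff.mp he
    rw [dif_pos h2, dif_neg (show ((m : ℕ) + 1) % 2 ≠ 0 by omega)]
    simp
  · have ho2 := Nat.odd_iff.mp ho
    rw [dif_neg (show (m : ℕ) % 2 ≠ 0 by omega),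
      dif_pos (show ((m : ℕ) - 1) % 2 = 0 by omega)]
    apply Fin.ext
    simp; omega

lemma hatO_zero {g : ℕ} (h0 : 0 < 2 * g) (h1 : 1 < 2 * g) :
    hatO (⟨0, h0⟩ : Fin (2 * g)) = ⟨1, h1⟩ := by
  simp [hatO]

lemma hatO_one {g : ℕ} (h0 : 0 < 2 * g) (h1 : 1 < 2 * g) :
    hatO (⟨1, h1⟩ : Fin (2 * g)) = ⟨0, h0⟩ := by
  unfold hatO
  rw [dif_neg (by simp)]
  rfl

lemma key_nonzero (g k : ℕ) (hk3 : 3 ≤ k) (hk2g : k ≤ 2 * g) :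
    (DeltaOB g k OCell.X)
      (fun q : Fin k => OCell.e ⟨q, lt_of_lt_of_le q.isLt hk2g⟩) = 1 := by
  have hk2 : k ≠ 2 := by omega
  simp only [DeltaOB, if_neg hk2]
  rw [Finset.sum_apply']
  rw [Finset.sum_eq_single (fun q : Fin k => (⟨q, lt_of_lt_of_le q.isLt hk2g⟩ : Fin (2 * g)))]
  · have hmono : ∀ a b : Fin k,
        a < b → (⟨a, lt_of_lt_of_le a.isLt hk2g⟩ : Fin (2 * g)) < ⟨b, lt_of_lt_of_le b.isLt hk2g⟩ := by
      intro a b hab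
      exact Fin.mk_lt_mk.mpr hab
    rw [if_pos hmono, Finsupp.add_apply, Finsupp.single_apply, Finsupp.single_apply,
      if_pos rfl, if_neg, add_zero]
    intro h
    have h0' := congrFun h ⟨0, by omega⟩
    simp only [OCell.e.injEq] at h0'
    rw [hatO_zero (by omega) (by omega)] at h0'
    exact absurd (Fin.mk.inj_iff.mp h0') (by omega)
  · intro f _ hf
    by_cases hm : ∀ a b : Fin k, a < b → f a < f b
    · rw [if_pos hm, Finsupp.add_apply, Finsupp.single_apply, Finsupp.single_apply,
        if_neg, if_neg, add_zero]
      · intro h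
        have h0k : 0 < k := by omega
        have h1k : 1 < k := by omega
        have h02 : 0 < 2 * g := by omega
        have h12 : 1 < 2 * g := by omega
        have h0' := congrFun h ⟨0, h0k⟩
        have h1' := congrFun h ⟨1, h1k⟩
        simp only [OCell.e.injEq] at h0' h1'
        have e0 : f ⟨0, h0k⟩ = hatO ⟨0, h02⟩ := by
          have h2 := congrArg hatO h0'
          rw [hatO_hatO] at h2
          exact h2
        have e1 : f ⟨1, h1k⟩ = hatO ⟨1, h12⟩ := by
          have h2 := congrArg hatO h1'
          rw [hatO_hatO] at h2
          exact h2
        have hlt := hm ⟨0, h0k⟩ ⟨1, h1k⟩ (Fin.mk_lt_mk.mpr Nat.zero_lt_one)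
        rw [e0, e1, hatO_zero h02 h12, hatO_one h02 h12] at hlt
        exact absurd (Fin.mk_lt_mk.mp hlt) (by omega)
      · intro h
        apply hf
        funext q
        have hq := congrFun h q
        simp only [OCell.e.injEq] at hq
        exact hq
    · rw [if_neg hm]; rfl
  · intro h; exact absurd (Finset.mem_univ _) h

/-- Let `g ≥ 2`. For every `k` with `3 ≤ k ≤ 2g` one has `Δ_k(X) ≠ 0`, and
for every `k > 2g` one has `Δ_k(X) = 0`. Hence the `A_∞`-coalgebra structure on the mod-2
homology of a closed compact orientable surface of genus `g ≥ 2` has non-trivial higher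
order structure. -/
theorem orientable_surface_higher_structure (g : ℕ) (hg : 2 ≤ g) :
    (∀ k : ℕ, 3 ≤ k → k ≤ 2 * g → DeltaOB g k OCell.X ≠ 0) ∧
    (∀ k : ℕ, 2 * g < k → DeltaOB g k OCell.X = 0) := by
  constructor
  · intro k hk3 hk2g h0
    have hval := key_nonzero g k hk3 hk2g
    rw [h0] at hval
    simp at hval
  · intro k hk
    have hk2 : k ≠ 2 := by omega
    simp only [DeltaOB, if_neg hk2]
    apply Finset.sum_eq_zero
    intro f _
    rw [if_neg]
    intro hmono
    have hinj : Function.Injective f := by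
      intro a b hab
      rcases lt_trichotomy a b with h | h | h
      · exact absurd hab (hmono a b h).ne
      · exact h
      · exact absurd hab.symm (hmono b a h).ne
    have := Fintype.card_le_of_injective f hinj
    simp only [Fintype.card_fin] at this
    omega
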